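/- Second-order tree anomaly of pure Yang–Mills vanishes if and only if the structure constants satisfy the Jacobi identity: the element 𝒜(T,T) := 2( B_{aμ} C_a^μ − B_a D_a ) − E_{aμν} C_a^{μν} of the jet algebra 𝒜 (sum over a and the Lorentz indices) is zero if and only if f_{eab} f_{ecd} + f_{ebc} f_{ead} + f_{eca} f_{ebd} = 0 (sum over e) for all a,b,c,d. -/

import Mathlib

open scoped TensorProduct

noncomputable section

/-- Lorentz indices. -/
abbrev Idx : Type := Fin 4

/-- The Minkowski metric `η = diag(1,-1,-1,-1)`, as complex scalars. -/
def η (μ ν : Idx) : ℂ := if μ = ν then (if μ = 0 then 1 else -1) else 0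

/-- Even generators `v_{aμ;M}` of the jet algebra. -/
structure EvenGen (r : ℕ) : Type where
  a : Fin r
  μ : Idx
  M : Multiset Idx
deriving DecidableEq

/-- Odd generators of the jet algebra: `u_{a;M}` (`tilde = false`) and `ũ_{a;M}`
(`tilde = true`). -/
structure OddGen (r : ℕ) : Type where
  tilde : Bool
  a : Fin r
  M : Multiset Idx
deriving DecidableEq

/-- The jet algebra `𝒜` of pure Yang-Mills: the free ℤ₂-graded-commutative unital
ℂ-algebra on the even generators `v_{aμ;M}` and the odd generators `u_{a;M}`, `ũ_{a;M}`,
realized concretely as the tensor product of the commutative polynomial algebra on the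
even generators with the exterior algebra of the free ℂ-module on the odd generators. -/
abbrev Jet (r : ℕ) : Type :=
  MvPolynomial (EvenGen r) ℂ ⊗[ℂ] ExteriorAlgebra ℂ (OddGen r →₀ ℂ)

variable {r : ℕ}

/-- The generator `v_{aμ;M}` as an element of `𝒜`. -/
def vGen (a : Fin r) (μ : Idx) (M : Multiset Idx) : Jet r :=
  MvPolynomial.X ⟨a, μ, M⟩ ⊗ₜ[ℂ] 1

/-- The generator `u_{a;M}` as an element of `𝒜`. -/
def uGen (a : Fin r) (M : Multiset Idx) : Jet r :=
  1 ⊗ₜ[ℂ] ExteriorAlgebra.ι ℂ (Finsupp.single ⟨false, a, M⟩ (1 : ℂ))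

/-- The generator `ũ_{a;M}` as an element of `𝒜`. -/
def utGen (a : Fin r) (M : Multiset Idx) : Jet r :=
  1 ⊗ₜ[ℂ] ExteriorAlgebra.ι ℂ (Finsupp.single ⟨true, a, M⟩ (1 : ℂ))

/-- Data of the formal derivatives `d_ν`, the grading (parity) automorphism `σ`
(which is `+1` on even elements and `-1` on odd elements, so that the graded Leibniz
rule for the odd derivation `d_Q` can be written as `d_Q(xy) = (d_Q x) y + σ(x) d_Q y`),
and the gauge variation `d_Q`, together with their defining properties.
Since `𝒜` is generated by the generators, these properties determine `d_ν`, `σ`, `d_Q`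
uniquely. -/
structure DerData (r : ℕ) where
  /-- the formal derivative `d_ν` -/
  d : Idx → Jet r →ₗ[ℂ] Jet r
  /-- the parity automorphism -/
  σ : Jet r →ₐ[ℂ] Jet r
  /-- the gauge variation `d_Q` -/
  dQ : Jet r →ₗ[ℂ] Jet r
  d_mul : ∀ (ν : Idx) (x y : Jet r), d ν (x * y) = d ν x * y + x * d ν y
  d_v : ∀ (ν : Idx) (a : Fin r) (μ : Idx) (M : Multiset Idx),
    d ν (vGen a μ M) = vGen a μ (ν ::ₘ M)
  d_u : ∀ (ν : Idx) (a : Fin r) (M : Multiset Idx), d ν (uGen a M) = uGen a (ν ::ₘ M)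
  d_ut : ∀ (ν : Idx) (a : Fin r) (M : Multiset Idx), d ν (utGen a M) = utGen a (ν ::ₘ M)
  σ_v : ∀ (a : Fin r) (μ : Idx) (M : Multiset Idx), σ (vGen a μ M) = vGen a μ M
  σ_u : ∀ (a : Fin r) (M : Multiset Idx), σ (uGen a M) = - uGen a M
  σ_ut : ∀ (a : Fin r) (M : Multiset Idx), σ (utGen a M) = - utGen a M
  dQ_mul : ∀ x y : Jet r, dQ (x * y) = dQ x * y + σ x * dQ y
  dQ_v : ∀ (a : Fin r) (μ : Idx) (M : Multiset Idx),
    dQ (vGen a μ M) = Complex.I • uGen a (μ ::ₘ M)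
  dQ_u : ∀ (a : Fin r) (M : Multiset Idx), dQ (uGen a M) = 0
  dQ_ut : ∀ (a : Fin r) (M : Multiset Idx),
    dQ (utGen a M) = (-Complex.I) • ∑ ρ : Idx, ∑ s : Idx, η ρ s • vGen a ρ (s ::ₘ M)

/-- The wave-equation elements `η^{ρσ} ξ_{;M+{ρ,σ}}`, for `ξ` any generator. -/
def IsWave (w : Jet r) : Prop :=
  (∃ (a : Fin r) (μ : Idx) (M : Multiset Idx),
      w = ∑ ρ : Idx, ∑ s : Idx, η ρ s • vGen a μ (ρ ::ₘ s ::ₘ M)) ∨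
  (∃ (a : Fin r) (M : Multiset Idx),
      w = ∑ ρ : Idx, ∑ s : Idx, η ρ s • uGen a (ρ ::ₘ s ::ₘ M)) ∨
  (∃ (a : Fin r) (M : Multiset Idx),
      w = ∑ ρ : Idx, ∑ s : Idx, η ρ s • utGen a (ρ ::ₘ s ::ₘ M))

/-- The equations-of-motion ideal `I`: the two-sided ideal of `𝒜` generated by the
wave-equation elements (as a ℂ-subspace, the span of all `p * w * q` with `w` a
wave-equation element). -/
def eom (r : ℕ) : Submodule ℂ (Jet r) :=
  Submodule.span ℂ {x : Jet r | ∃ w p q : Jet r, IsWave w ∧ x = p * w * q}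

/-- The raised formal derivative `d^μ = η^{μν} d_ν`. -/
def dUp (D : DerData r) (μ : Idx) (x : Jet r) : Jet r := ∑ ν : Idx, η μ ν • D.d ν x

/-- `v_a^μ := η^{μν} v_{aν}`. -/
def vUp (a : Fin r) (μ : Idx) : Jet r := ∑ ν : Idx, η μ ν • vGen a ν 0

/-- The field strength `F_a^{μν} := d^μ v_a^ν - d^ν v_a^μ`. -/
def Fuu (D : DerData r) (a : Fin r) (μ ν : Idx) : Jet r :=
  dUp D μ (vUp a ν) - dUp D ν (vUp a μ)

/-- The lowered field strength `F_{aμν} := η_{μρ} η_{νσ} F_a^{ρσ}`. -/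
def Fdd (D : DerData r) (a : Fin r) (μ ν : Idx) : Jet r :=
  ∑ ρ : Idx, ∑ s : Idx, (η μ ρ * η ν s) • Fuu D a ρ s

variable (D : DerData r) (f : Fin r → Fin r → Fin r → ℝ)

/-- The Yang-Mills interaction Lagrangian
`T := f_{abc}(½ v_{aμ} v_{bν} F_c^{νμ} + u_a v_b^μ (d_μ ũ_c))`. -/
def Tint : Jet r :=
  ∑ a : Fin r, ∑ b : Fin r, ∑ c : Fin r, ((f a b c : ℝ) : ℂ) •
    ((2⁻¹ : ℂ) • ∑ μ : Idx, ∑ ν : Idx, vGen a μ 0 * vGen b ν 0 * Fuu D c ν μ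
      + ∑ μ : Idx, uGen a 0 * vUp b μ * D.d μ (utGen c 0))

/-- `T^μ := f_{abc}(u_a v_{bν} F_c^{νμ} - ½ u_a u_b (d^μ ũ_c))`. -/
def Tup (μ : Idx) : Jet r :=
  ∑ a : Fin r, ∑ b : Fin r, ∑ c : Fin r, ((f a b c : ℝ) : ℂ) •
    (∑ ν : Idx, uGen a 0 * vGen b ν 0 * Fuu D c ν μ
      - (2⁻¹ : ℂ) • (uGen a 0 * uGen b 0 * dUp D μ (utGen c 0)))

/-- `T^{μν} := ½ f_{abc} u_a u_b F_c^{μν}`. -/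
def Tupup (μ ν : Idx) : Jet r :=
  (2⁻¹ : ℂ) • ∑ a : Fin r, ∑ b : Fin r, ∑ c : Fin r, ((f a b c : ℝ) : ℂ) •
    (uGen a 0 * uGen b 0 * Fuu D c μ ν)

/-- The Wick submonomial `B_{aμ} := -f_{abc} u_b v_{cμ}`. -/
def Bdn (a : Fin r) (μ : Idx) : Jet r :=
  ∑ b : Fin r, ∑ c : Fin r, (-((f a b c : ℝ) : ℂ)) • (uGen b 0 * vGen c μ 0)

/-- `B_a^μ := η^{μν} B_{aν}`. -/
def Bup (a : Fin r) (μ : Idx) : Jet r := ∑ ν : Idx, η μ ν • Bdn f a ν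

/-- The Wick submonomial `C_{aμ} := f_{abc}(v_b^ν F_{cνμ} - u_b (d_μ ũ_c))`. -/
def Cdn (a : Fin r) (μ : Idx) : Jet r :=
  ∑ b : Fin r, ∑ c : Fin r, ((f a b c : ℝ) : ℂ) •
    (∑ ν : Idx, vUp b ν * Fdd D c ν μ - uGen b 0 * D.d μ (utGen c 0))

/-- `C_a^μ := η^{μν} C_{aν}`. -/
def Cup (a : Fin r) (μ : Idx) : Jet r := ∑ ν : Idx, η μ ν • Cdn D f a ν

/-- The Wick submonomial `D_a := f_{abc} v_b^μ (d_μ ũ_c)`. -/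
def Dgh (a : Fin r) : Jet r :=
  ∑ b : Fin r, ∑ c : Fin r, ((f a b c : ℝ) : ℂ) •
    ∑ μ : Idx, vUp b μ * D.d μ (utGen c 0)

/-- The Wick submonomial `E_{aμν} := f_{abc} v_{bμ} v_{cν}`. -/
def Edd (a : Fin r) (μ ν : Idx) : Jet r :=
  ∑ b : Fin r, ∑ c : Fin r, ((f a b c : ℝ) : ℂ) • (vGen b μ 0 * vGen c ν 0)

/-- `E_a^{μν} := η^{μρ} η^{νσ} E_{aρσ}`. -/
def Euu (a : Fin r) (μ ν : Idx) : Jet r :=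
  ∑ ρ : Idx, ∑ s : Idx, (η μ ρ * η ν s) • Edd f a ρ s

/-- The Wick submonomial `C_{aμν} := -f_{abc} u_b F_{cμν}`. -/
def Cdd (a : Fin r) (μ ν : Idx) : Jet r :=
  ∑ b : Fin r, ∑ c : Fin r, (-((f a b c : ℝ) : ℂ)) • (uGen b 0 * Fdd D c μ ν)

/-- `C_a^{μν} := η^{μρ} η^{νσ} C_{aρσ}`. -/
def Cuu (a : Fin r) (μ ν : Idx) : Jet r :=
  ∑ ρ : Idx, ∑ s : Idx, (η μ ρ * η ν s) • Cdd D f a ρ s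

/-- The Wick submonomial `B_a := ½ f_{abc} u_b u_c`. -/
def Bgh (a : Fin r) : Jet r :=
  (2⁻¹ : ℂ) • ∑ b : Fin r, ∑ c : Fin r, ((f a b c : ℝ) : ℂ) • (uGen b 0 * uGen c 0)

/-! ### Auxiliary infrastructure for the proof -/

section Aux

open MvPolynomial ExteriorAlgebra

lemma eta_ne {μ ν : Idx} (h : ν ≠ μ) : η μ ν = 0 := by
  rw [η, if_neg (Ne.symm h)]

lemma eta_zero : η (0 : Idx) 0 = 1 := by simp [η]

lemma sum_eta {M : Type*} [AddCommMonoid M] [Module ℂ M] (μ : Idx) (g : Idx → M) :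
    ∑ ν : Idx, η μ ν • g ν = η μ μ • g μ :=
  Finset.sum_eq_single μ (fun ν _ hν => by rw [eta_ne hν, zero_smul]) (by simp)

lemma sum_eta2 {M : Type*} [AddCommMonoid M] [Module ℂ M] (μ ν : Idx) (g : Idx → Idx → M) :
    ∑ ρ : Idx, ∑ s : Idx, (η μ ρ * η ν s) • g ρ s = (η μ μ * η ν ν) • g μ ν := by
  calc ∑ ρ : Idx, ∑ s : Idx, (η μ ρ * η ν s) • g ρ s
      = ∑ ρ : Idx, η μ ρ • (η ν ν • g ρ ν) := by
        refine Finset.sum_congr rfl fun ρ _ => ?_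
        rw [← sum_eta ν (fun s => g ρ s), Finset.smul_sum]
        exact Finset.sum_congr rfl fun s _ => by rw [mul_smul]
    _ = η μ μ • (η ν ν • g μ ν) := sum_eta μ _
    _ = (η μ μ * η ν ν) • g μ ν := (mul_smul _ _ _).symm

lemma eta_sq (μ : Idx) : η μ μ * η μ μ = 1 := by
  fin_cases μ <;> norm_num [η, Fin.ext_iff]

variable {r : ℕ}

/-- `F a b c` : the structure constants as complex scalars. -/
def Fc (f : Fin r → Fin r → Fin r → ℝ) (a b c : Fin r) : ℂ := ((f a b c : ℝ) : ℂ)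

/-- basis vector for `u_a`. -/
def eU (a : Fin r) : OddGen r →₀ ℂ := Finsupp.single ⟨false, a, 0⟩ 1

/-- basis vector for `d_μ ũ_a`. -/
def eW (a : Fin r) (μ : Idx) : OddGen r →₀ ℂ := Finsupp.single ⟨true, a, μ ::ₘ 0⟩ 1

/-- canonical `u v v F` monomial. -/
def q1 (p q w u : Fin r) : Jet r :=
  ∑ μ : Idx, ∑ ν : Idx, (η μ μ * η ν ν) •
    ((MvPolynomial.X ⟨p, μ, 0⟩ * (MvPolynomial.X ⟨q, ν, 0⟩ *
      (MvPolynomial.X ⟨w, ν, μ ::ₘ 0⟩ - MvPolynomial.X ⟨w, μ, ν ::ₘ 0⟩))) ⊗ₜ[ℂ]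
        ExteriorAlgebra.ι ℂ (eU u))

/-- canonical `u u v dũ` monomial. -/
def q2 (x y c w : Fin r) : Jet r :=
  ∑ μ : Idx, η μ μ •
    ((MvPolynomial.X ⟨c, μ, 0⟩ : MvPolynomial (EvenGen r) ℂ) ⊗ₜ[ℂ]
      (ExteriorAlgebra.ι ℂ (eU x) * (ExteriorAlgebra.ι ℂ (eU y) * ExteriorAlgebra.ι ℂ (eW w μ))))

end Aux
section Aux2

open MvPolynomial ExteriorAlgebra

variable {r : ℕ}

lemma iota_swap (x y : OddGen r →₀ ℂ) :
    ExteriorAlgebra.ι ℂ x * ExteriorAlgebra.ι ℂ y = -(ExteriorAlgebra.ι ℂ y * ExteriorAlgebra.ι ℂ x) :=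
  eq_neg_of_add_eq_zero_left (ExteriorAlgebra.ι_add_mul_swap x y)

lemma smul_tmul_neg_poly (c : ℂ) (P Q : MvPolynomial (EvenGen r) ℂ)
    (E : ExteriorAlgebra ℂ (OddGen r →₀ ℂ)) (h : Q = -P) :
    c • (Q ⊗ₜ[ℂ] E) = -(c • (P ⊗ₜ[ℂ] E)) := by
  rw [h, TensorProduct.neg_tmul, smul_neg]

lemma smul_tmul_neg_ext (c : ℂ) (P : MvPolynomial (EvenGen r) ℂ)
    (E E' : ExteriorAlgebra ℂ (OddGen r →₀ ℂ)) (h : E' = -E) :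
    c • (P ⊗ₜ[ℂ] E') = -(c • (P ⊗ₜ[ℂ] E)) := by
  rw [h, TensorProduct.tmul_neg, smul_neg]

lemma q1_swap (p q w u : Fin r) : q1 q p w u = - q1 p q w u := by
  unfold q1
  rw [Finset.sum_comm, ← Finset.sum_neg_distrib]
  refine Finset.sum_congr rfl fun μ _ => ?_
  rw [← Finset.sum_neg_distrib]
  refine Finset.sum_congr rfl fun ν _ => ?_
  rw [mul_comm (η ν ν) (η μ μ)]
  exact smul_tmul_neg_poly _ _ _ _ (by ring)

lemma q2_swap (x y c w : Fin r) : q2 y x c w = - q2 x y c w := by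
  unfold q2
  rw [← Finset.sum_neg_distrib]
  refine Finset.sum_congr rfl fun μ _ => ?_
  exact smul_tmul_neg_ext _ _ _ _
    (by rw [← mul_assoc, iota_swap (eU y) (eU x), neg_mul, mul_assoc])

lemma vUp_eq (a : Fin r) (μ : Idx) : vUp a μ = η μ μ • vGen a μ 0 := sum_eta μ _

lemma dUp_eq (D : DerData r) (μ : Idx) (x : Jet r) : dUp D μ x = η μ μ • D.d μ x := sum_eta μ _

lemma Fuu_eq (D : DerData r) (a : Fin r) (μ ν : Idx) :
    Fuu D a μ ν = (η μ μ * η ν ν) • (vGen a ν (μ ::ₘ 0) - vGen a μ (ν ::ₘ 0)) := by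
  unfold Fuu
  rw [dUp_eq, dUp_eq, vUp_eq, vUp_eq, map_smul, map_smul, D.d_v, D.d_v,
    smul_smul, smul_smul, mul_comm (η ν ν) (η μ μ), smul_sub]

lemma Fdd_eq (D : DerData r) (a : Fin r) (μ ν : Idx) :
    Fdd D a μ ν = vGen a ν (μ ::ₘ 0) - vGen a μ (ν ::ₘ 0) := by
  unfold Fdd
  rw [sum_eta2 μ ν (fun ρ s => Fuu D a ρ s), Fuu_eq, smul_smul]
  rw [show (η μ μ * η ν ν) * (η μ μ * η ν ν) = (η μ μ * η μ μ) * (η ν ν * η ν ν) by ring,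
    eta_sq, eta_sq, one_mul, one_smul]

lemma Cup_eq (D : DerData r) (f : Fin r → Fin r → Fin r → ℝ) (a : Fin r) (μ : Idx) :
    Cup D f a μ = η μ μ • Cdn D f a μ := sum_eta μ _

lemma Cuu_eq (D : DerData r) (f : Fin r → Fin r → Fin r → ℝ) (a : Fin r) (μ ν : Idx) :
    Cuu D f a μ ν = (η μ μ * η ν ν) • Cdd D f a μ ν := sum_eta2 μ ν _

lemma mul_expand {r : ℕ} (s t : Fin r → Fin r → ℂ) (x y : Fin r → Fin r → Jet r) :
    (∑ b : Fin r, ∑ c : Fin r, s b c • x b c) * (∑ b : Fin r, ∑ c : Fin r, t b c • y b c)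
    = ∑ b : Fin r, ∑ c : Fin r, ∑ b' : Fin r, ∑ c' : Fin r,
        (s b c * t b' c') • (x b c * y b' c') := by
  rw [Finset.sum_mul]
  refine Finset.sum_congr rfl fun b _ => ?_
  rw [Finset.sum_mul]
  refine Finset.sum_congr rfl fun c _ => ?_
  rw [Finset.mul_sum]
  refine Finset.sum_congr rfl fun b' _ => ?_
  rw [Finset.mul_sum]
  refine Finset.sum_congr rfl fun c' _ => ?_
  rw [smul_mul_smul_comm]

lemma prodA (b b' c c' : Fin r) (μ ν : Idx) :
    (uGen b 0 * vGen c μ 0) * (vGen b' ν 0 * (vGen c' μ (ν ::ₘ 0) - vGen c' ν (μ ::ₘ 0)))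
    = (MvPolynomial.X ⟨c, μ, 0⟩ * (MvPolynomial.X ⟨b', ν, 0⟩ *
        (MvPolynomial.X ⟨c', μ, ν ::ₘ 0⟩ - MvPolynomial.X ⟨c', ν, μ ::ₘ 0⟩))) ⊗ₜ[ℂ]
        ExteriorAlgebra.ι ℂ (eU b) := by
  simp only [uGen, vGen, eU, ← TensorProduct.sub_tmul,
    Algebra.TensorProduct.tmul_mul_tmul, one_mul, mul_one, mul_assoc]

lemma prodB (b b' c c' : Fin r) (μ : Idx) :
    (uGen b 0 * vGen c μ 0) * (uGen b' 0 * utGen c' (μ ::ₘ 0))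
    = (MvPolynomial.X ⟨c, μ, 0⟩ : MvPolynomial (EvenGen r) ℂ) ⊗ₜ[ℂ]
      (ExteriorAlgebra.ι ℂ (eU b) * (ExteriorAlgebra.ι ℂ (eU b') * ExteriorAlgebra.ι ℂ (eW c' μ))) := by
  simp only [uGen, vGen, utGen, eU, eW, Algebra.TensorProduct.tmul_mul_tmul, one_mul, mul_one,
    mul_assoc]

lemma prodD (b b' c c' : Fin r) (μ : Idx) :
    (uGen b 0 * uGen c 0) * (vGen b' μ 0 * utGen c' (μ ::ₘ 0))
    = (MvPolynomial.X ⟨b', μ, 0⟩ : MvPolynomial (EvenGen r) ℂ) ⊗ₜ[ℂ]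
      (ExteriorAlgebra.ι ℂ (eU b) * (ExteriorAlgebra.ι ℂ (eU c) * ExteriorAlgebra.ι ℂ (eW c' μ))) := by
  simp only [uGen, vGen, utGen, eU, eW, Algebra.TensorProduct.tmul_mul_tmul, one_mul, mul_one,
    mul_assoc]

lemma prodE (b b' c c' : Fin r) (μ ν : Idx) :
    (vGen b μ 0 * vGen c ν 0) * (uGen b' 0 * (vGen c' ν (μ ::ₘ 0) - vGen c' μ (ν ::ₘ 0)))
    = (MvPolynomial.X ⟨b, μ, 0⟩ * (MvPolynomial.X ⟨c, ν, 0⟩ *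
        (MvPolynomial.X ⟨c', ν, μ ::ₘ 0⟩ - MvPolynomial.X ⟨c', μ, ν ::ₘ 0⟩))) ⊗ₜ[ℂ]
        ExteriorAlgebra.ι ℂ (eU b') := by
  simp only [uGen, vGen, eU, ← TensorProduct.sub_tmul,
    Algebra.TensorProduct.tmul_mul_tmul, one_mul, mul_one, mul_assoc]

end Aux2
section Aux3

open MvPolynomial ExteriorAlgebra

variable {r : ℕ}

lemma sum_idx_into_sum4 {M : Type*} [AddCommMonoid M]
    (g : Idx → Fin r → Fin r → Fin r → Fin r → M) :
    ∑ μ : Idx, ∑ b : Fin r, ∑ c : Fin r, ∑ b' : Fin r, ∑ c' : Fin r, g μ b c b' c'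
    = ∑ b : Fin r, ∑ c : Fin r, ∑ b' : Fin r, ∑ c' : Fin r, ∑ μ : Idx, g μ b c b' c' := by
  rw [Finset.sum_comm]
  refine Finset.sum_congr rfl fun b _ => ?_
  rw [Finset.sum_comm]
  refine Finset.sum_congr rfl fun c _ => ?_
  rw [Finset.sum_comm]
  refine Finset.sum_congr rfl fun b' _ => ?_
  exact Finset.sum_comm

lemma L3 (D : DerData r) (f : Fin r → Fin r → Fin r → ℝ) (a : Fin r) :
    ∑ μ : Idx, ∑ ν : Idx, Edd f a μ ν * Cuu D f a μ ν
    = ∑ b : Fin r, ∑ c : Fin r, ∑ b' : Fin r, ∑ c' : Fin r,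
        (-(Fc f a b c * Fc f a b' c')) • q1 b c c' b' := by
  have step1 : ∀ μ ν : Idx, Edd f a μ ν * Cuu D f a μ ν
      = ∑ b : Fin r, ∑ c : Fin r, ∑ b' : Fin r, ∑ c' : Fin r,
          (η μ μ * η ν ν) • ((Fc f a b c * -Fc f a b' c') •
            ((vGen b μ 0 * vGen c ν 0) *
              (uGen b' 0 * (vGen c' ν (μ ::ₘ 0) - vGen c' μ (ν ::ₘ 0))))) := by
    intro μ ν
    have hCdd : Cdd D f a μ ν = ∑ b' : Fin r, ∑ c' : Fin r,
        (-Fc f a b' c') • (uGen b' 0 * (vGen c' ν (μ ::ₘ 0) - vGen c' μ (ν ::ₘ 0))) := by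
      unfold Cdd Fc
      refine Finset.sum_congr rfl fun b' _ => Finset.sum_congr rfl fun c' _ => ?_
      rw [Fdd_eq]
    rw [Cuu_eq, mul_smul_comm, hCdd]
    show (η μ μ * η ν ν) • ((∑ b : Fin r, ∑ c : Fin r, Fc f a b c • (vGen b μ 0 * vGen c ν 0)) * _) = _
    rw [mul_expand, Finset.smul_sum]
    refine Finset.sum_congr rfl fun b _ => ?_
    rw [Finset.smul_sum]
    refine Finset.sum_congr rfl fun c _ => ?_
    rw [Finset.smul_sum]
    refine Finset.sum_congr rfl fun b' _ => ?_
    rw [Finset.smul_sum]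
  calc ∑ μ : Idx, ∑ ν : Idx, Edd f a μ ν * Cuu D f a μ ν
      = ∑ μ : Idx, ∑ b : Fin r, ∑ c : Fin r, ∑ b' : Fin r, ∑ c' : Fin r, ∑ ν : Idx,
          (η μ μ * η ν ν) • ((Fc f a b c * -Fc f a b' c') •
            ((vGen b μ 0 * vGen c ν 0) *
              (uGen b' 0 * (vGen c' ν (μ ::ₘ 0) - vGen c' μ (ν ::ₘ 0))))) := by
        refine Finset.sum_congr rfl fun μ _ => ?_
        rw [← sum_idx_into_sum4]
        exact Finset.sum_congr rfl fun ν _ => step1 μ ν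
    _ = ∑ b : Fin r, ∑ c : Fin r, ∑ b' : Fin r, ∑ c' : Fin r, ∑ μ : Idx, ∑ ν : Idx,
          (η μ μ * η ν ν) • ((Fc f a b c * -Fc f a b' c') • _) := sum_idx_into_sum4 _
    _ = ∑ b : Fin r, ∑ c : Fin r, ∑ b' : Fin r, ∑ c' : Fin r,
        (-(Fc f a b c * Fc f a b' c')) • q1 b c c' b' := by
        refine Finset.sum_congr rfl fun b _ => Finset.sum_congr rfl fun c _ =>
          Finset.sum_congr rfl fun b' _ => Finset.sum_congr rfl fun c' _ => ?_
        rw [show (-(Fc f a b c * Fc f a b' c')) = Fc f a b c * -Fc f a b' c' by ring]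
        unfold q1
        rw [Finset.smul_sum]
        refine Finset.sum_congr rfl fun μ _ => ?_
        rw [Finset.smul_sum]
        refine Finset.sum_congr rfl fun ν _ => ?_
        rw [smul_comm, prodE]

end Aux3
section Aux4

open MvPolynomial ExteriorAlgebra

variable {r : ℕ}

lemma L2 (D : DerData r) (f : Fin r → Fin r → Fin r → ℝ) (a : Fin r) :
    Bgh f a * Dgh D f a
    = ∑ b : Fin r, ∑ c : Fin r, ∑ b' : Fin r, ∑ c' : Fin r,
        ((2⁻¹ : ℂ) * (Fc f a b c * Fc f a b' c')) • q2 b c b' c' := by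
  have hD : Dgh D f a = ∑ b' : Fin r, ∑ c' : Fin r, Fc f a b' c' •
      ∑ μ : Idx, η μ μ • (vGen b' μ 0 * utGen c' (μ ::ₘ 0)) := by
    unfold Dgh Fc
    refine Finset.sum_congr rfl fun b' _ => Finset.sum_congr rfl fun c' _ => ?_
    congr 1
    refine Finset.sum_congr rfl fun μ _ => ?_
    rw [vUp_eq, D.d_ut, smul_mul_assoc]
  have hB : Bgh f a = (2⁻¹ : ℂ) •
      ∑ b : Fin r, ∑ c : Fin r, Fc f a b c • (uGen b 0 * uGen c 0) := rfl
  rw [hB, hD, smul_mul_assoc, mul_expand, Finset.smul_sum]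
  refine Finset.sum_congr rfl fun b _ => ?_
  rw [Finset.smul_sum]
  refine Finset.sum_congr rfl fun c _ => ?_
  rw [Finset.smul_sum]
  refine Finset.sum_congr rfl fun b' _ => ?_
  rw [Finset.smul_sum]
  refine Finset.sum_congr rfl fun c' _ => ?_
  rw [smul_smul]
  congr 1
  unfold q2
  rw [Finset.mul_sum]
  refine Finset.sum_congr rfl fun μ _ => ?_
  rw [mul_smul_comm, prodD]

lemma L1 (D : DerData r) (f : Fin r → Fin r → Fin r → ℝ) (a : Fin r) :
    ∑ μ : Idx, Bdn f a μ * Cup D f a μ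
    = ∑ b : Fin r, ∑ c : Fin r, ∑ b' : Fin r, ∑ c' : Fin r,
        (-(Fc f a b c * Fc f a b' c')) • (q1 b' c c' b - q2 b b' c c') := by
  have hC : ∀ μ : Idx, Cdn D f a μ = ∑ b' : Fin r, ∑ c' : Fin r, Fc f a b' c' •
      ((∑ ν : Idx, η ν ν • (vGen b' ν 0 * (vGen c' μ (ν ::ₘ 0) - vGen c' ν (μ ::ₘ 0))))
        - uGen b' 0 * utGen c' (μ ::ₘ 0)) := by
    intro μ
    unfold Cdn Fc
    refine Finset.sum_congr rfl fun b' _ => Finset.sum_congr rfl fun c' _ => ?_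
    rw [D.d_ut]
    congr 2
    refine Finset.sum_congr rfl fun ν _ => ?_
    rw [vUp_eq, Fdd_eq, smul_mul_assoc]
  have step1 : ∀ μ : Idx, Bdn f a μ * Cup D f a μ
      = ∑ b : Fin r, ∑ c : Fin r, ∑ b' : Fin r, ∑ c' : Fin r,
          η μ μ • ((-Fc f a b c * Fc f a b' c') •
            ((uGen b 0 * vGen c μ 0) *
              ((∑ ν : Idx, η ν ν • (vGen b' ν 0 * (vGen c' μ (ν ::ₘ 0) - vGen c' ν (μ ::ₘ 0))))
                - uGen b' 0 * utGen c' (μ ::ₘ 0)))) := by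
    intro μ
    rw [Cup_eq, mul_smul_comm, hC]
    show η μ μ • ((∑ b : Fin r, ∑ c : Fin r, (-Fc f a b c) • (uGen b 0 * vGen c μ 0)) * _) = _
    rw [mul_expand, Finset.smul_sum]
    refine Finset.sum_congr rfl fun b _ => ?_
    rw [Finset.smul_sum]
    refine Finset.sum_congr rfl fun c _ => ?_
    rw [Finset.smul_sum]
    refine Finset.sum_congr rfl fun b' _ => ?_
    rw [Finset.smul_sum]
  calc ∑ μ : Idx, Bdn f a μ * Cup D f a μ
      = ∑ b : Fin r, ∑ c : Fin r, ∑ b' : Fin r, ∑ c' : Fin r, ∑ μ : Idx,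
          η μ μ • ((-Fc f a b c * Fc f a b' c') •
            ((uGen b 0 * vGen c μ 0) *
              ((∑ ν : Idx, η ν ν • (vGen b' ν 0 * (vGen c' μ (ν ::ₘ 0) - vGen c' ν (μ ::ₘ 0))))
                - uGen b' 0 * utGen c' (μ ::ₘ 0)))) := by
        rw [← sum_idx_into_sum4]
        exact Finset.sum_congr rfl fun μ _ => step1 μ
    _ = ∑ b : Fin r, ∑ c : Fin r, ∑ b' : Fin r, ∑ c' : Fin r,
        (-(Fc f a b c * Fc f a b' c')) • (q1 b' c c' b - q2 b b' c c') := by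
        refine Finset.sum_congr rfl fun b _ => Finset.sum_congr rfl fun c _ =>
          Finset.sum_congr rfl fun b' _ => Finset.sum_congr rfl fun c' _ => ?_
        rw [show (-(Fc f a b c * Fc f a b' c')) = -Fc f a b c * Fc f a b' c' by ring,
          smul_sub]
        have hq1 : (-Fc f a b c * Fc f a b' c') • q1 b' c c' b
            = ∑ μ : Idx, (-Fc f a b c * Fc f a b' c') • ∑ ν : Idx, (η μ μ * η ν ν) •
              ((uGen b 0 * vGen c μ 0) *
                (vGen b' ν 0 * (vGen c' μ (ν ::ₘ 0) - vGen c' ν (μ ::ₘ 0)))) := by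
          unfold q1
          rw [Finset.sum_comm, Finset.smul_sum]
          refine Finset.sum_congr rfl fun μ _ => ?_
          congr 1
          refine Finset.sum_congr rfl fun ν _ => ?_
          rw [prodA, mul_comm (η ν ν) (η μ μ)]
          congr 2
          ring
        have hq2 : (-Fc f a b c * Fc f a b' c') • q2 b b' c c'
            = ∑ μ : Idx, (-Fc f a b c * Fc f a b' c') • (η μ μ •
                ((uGen b 0 * vGen c μ 0) * (uGen b' 0 * utGen c' (μ ::ₘ 0)))) := by
          unfold q2
          rw [Finset.smul_sum]
          refine Finset.sum_congr rfl fun μ _ => ?_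
          rw [prodB]
        rw [hq1, hq2, ← Finset.sum_sub_distrib]
        refine Finset.sum_congr rfl fun μ _ => ?_
        rw [mul_sub, smul_sub (-Fc f a b c * Fc f a b' c'), smul_sub (η μ μ),
          smul_comm (η μ μ), smul_comm (η μ μ)]
        congr 1
        congr 1
        rw [Finset.mul_sum, Finset.smul_sum]
        refine Finset.sum_congr rfl fun ν _ => ?_
        rw [mul_smul_comm, smul_smul]

end Aux4
section Aux5

variable {r : ℕ}

/-- Quadruple sum over colour indices. -/
def S4 (g : Fin r → Fin r → Fin r → Fin r → Jet r) : Jet r :=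
  ∑ b : Fin r, ∑ c : Fin r, ∑ b' : Fin r, ∑ c' : Fin r, g b c b' c'

lemma S4_congr {g g' : Fin r → Fin r → Fin r → Fin r → Jet r}
    (h : ∀ b c b' c', g b c b' c' = g' b c b' c') : S4 g = S4 g' :=
  Finset.sum_congr rfl fun b _ => Finset.sum_congr rfl fun c _ =>
    Finset.sum_congr rfl fun b' _ => Finset.sum_congr rfl fun c' _ => h b c b' c'

lemma S4_swap23 (g : Fin r → Fin r → Fin r → Fin r → Jet r) :
    S4 g = S4 (fun b c b' c' => g b b' c c') :=
  Finset.sum_congr rfl fun b _ => Finset.sum_comm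

lemma S4_swap13 (g : Fin r → Fin r → Fin r → Fin r → Jet r) :
    S4 g = S4 (fun b c b' c' => g b' c b c') := by
  calc S4 g = ∑ b : Fin r, ∑ b' : Fin r, ∑ c : Fin r, ∑ c' : Fin r, g b c b' c' :=
        Finset.sum_congr rfl fun b _ => Finset.sum_comm
    _ = ∑ b' : Fin r, ∑ b : Fin r, ∑ c : Fin r, ∑ c' : Fin r, g b c b' c' := Finset.sum_comm
    _ = S4 (fun b c b' c' => g b' c b c') :=
        (Finset.sum_congr rfl fun b _ => Finset.sum_comm).symm

lemma S4_add (g g' : Fin r → Fin r → Fin r → Fin r → Jet r) :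
    S4 (fun b c b' c' => g b c b' c' + g' b c b' c') = S4 g + S4 g' := by
  simp only [S4, Finset.sum_add_distrib]

lemma S4_sub (g g' : Fin r → Fin r → Fin r → Fin r → Jet r) :
    S4 (fun b c b' c' => g b c b' c' - g' b c b' c') = S4 g - S4 g' := by
  simp only [S4, Finset.sum_sub_distrib]

lemma S4_smul (z : ℂ) (g : Fin r → Fin r → Fin r → Fin r → Jet r) :
    z • S4 g = S4 (fun b c b' c' => z • g b c b' c') := by
  simp only [S4, Finset.smul_sum]

lemma sum_into_S4 {α : Type*} [Fintype α] (g : α → Fin r → Fin r → Fin r → Fin r → Jet r) :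
    ∑ a : α, S4 (g a) = S4 (fun b c b' c' => ∑ a : α, g a b c b' c') := by
  unfold S4
  rw [Finset.sum_comm]
  refine Finset.sum_congr rfl fun b _ => ?_
  rw [Finset.sum_comm]
  refine Finset.sum_congr rfl fun c _ => ?_
  rw [Finset.sum_comm]
  refine Finset.sum_congr rfl fun b' _ => ?_
  exact Finset.sum_comm

lemma S4_neg (g : Fin r → Fin r → Fin r → Fin r → Jet r) :
    S4 (fun b c b' c' => -g b c b' c') = -S4 g := by
  simp only [S4, Finset.sum_neg_distrib]

lemma S4_eq_zero_of_neg (T : Jet r) (h : T = -T) : T = 0 := by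
  have h2 : T + T = 0 := by nth_rewrite 2 [h]; exact add_neg_cancel T
  calc T = (2⁻¹ : ℂ) • (T + T) := by
        rw [smul_add]
        rw [show (2⁻¹ : ℂ) • T + (2⁻¹ : ℂ) • T = ((2:ℂ)⁻¹ + 2⁻¹) • T from (add_smul _ _ T).symm]
        norm_num
    _ = (2⁻¹ : ℂ) • (0 : Jet r) := by rw [h2]
    _ = 0 := smul_zero _

/-- Vanishing lemma for the `q1` sector. -/
lemma V1 (f : Fin r → Fin r → Fin r → ℝ) :
    S4 (fun b c b' c' => ∑ a : Fin r,
      (-(Fc f a b c * Fc f a b' c') - Fc f a b b' * Fc f a c c') • q1 b' c c' b) = 0 := by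
  apply S4_eq_zero_of_neg
  rw [← S4_neg]
  nth_rewrite 1 [S4_swap23]
  refine S4_congr fun b c b' c' => ?_
  rw [← Finset.sum_neg_distrib]
  refine Finset.sum_congr rfl fun a _ => ?_
  rw [q1_swap b' c c' b, smul_neg]
  congr 2
  ring

/-- Vanishing lemma for the `q2` sector. -/
lemma V2 (f : Fin r → Fin r → Fin r → ℝ) :
    S4 (fun b c b' c' => ∑ a : Fin r,
      (Fc f a b c * Fc f a b' c' + Fc f a b' c * Fc f a b c') • q2 b b' c c') = 0 := by
  apply S4_eq_zero_of_neg
  rw [← S4_neg]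
  nth_rewrite 1 [S4_swap13]
  refine S4_congr fun b c b' c' => ?_
  rw [← Finset.sum_neg_distrib]
  refine Finset.sum_congr rfl fun a _ => ?_
  rw [q2_swap b b' c c', smul_neg]
  congr 2
  ring

end Aux5
section Aux6

variable {r : ℕ}

/-- The Jacobi combination of structure constants. -/
def Jr (f : Fin r → Fin r → Fin r → ℝ) (a b c d : Fin r) : ℝ :=
  ∑ e : Fin r, (f e a b * f e c d + f e b c * f e a d + f e c a * f e b d)

lemma keyId (D : DerData r) (f : Fin r → Fin r → Fin r → ℝ)
    (hf₂ : ∀ a b c, f a b c = - f a c b) :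
    ((2 : ℂ) • (∑ a : Fin r, ∑ μ : Idx, Bdn f a μ * Cup D f a μ
          - ∑ a : Fin r, Bgh f a * Dgh D f a)
        - ∑ a : Fin r, ∑ μ : Idx, ∑ ν : Idx, Edd f a μ ν * Cuu D f a μ ν)
    = S4 (fun b c b' c' => ((Jr f b b' c c' : ℝ) : ℂ) • (q1 b' c c' b - q2 b b' c c')) := by
  have h1 : ∑ a : Fin r, ∑ μ : Idx, Bdn f a μ * Cup D f a μ
      = S4 (fun b c b' c' => ∑ a : Fin r,
          (-(Fc f a b c * Fc f a b' c')) • (q1 b' c c' b - q2 b b' c c')) := by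
    rw [← sum_into_S4]
    exact Finset.sum_congr rfl fun a _ => L1 D f a
  have h2 : ∑ a : Fin r, Bgh f a * Dgh D f a
      = S4 (fun b c b' c' => ∑ a : Fin r,
          ((2⁻¹ : ℂ) * (Fc f a b c * Fc f a b' c')) • q2 b c b' c') := by
    rw [← sum_into_S4]
    exact Finset.sum_congr rfl fun a _ => L2 D f a
  have h3 : ∑ a : Fin r, ∑ μ : Idx, ∑ ν : Idx, Edd f a μ ν * Cuu D f a μ ν
      = S4 (fun b c b' c' => ∑ a : Fin r,
          (-(Fc f a b c * Fc f a b' c')) • q1 b c c' b') := by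
    rw [← sum_into_S4]
    exact Finset.sum_congr rfl fun a _ => L3 D f a
  rw [h1, h2, h3]
  have hsplit : S4 (fun b c b' c' => ∑ a : Fin r,
        (-(Fc f a b c * Fc f a b' c')) • (q1 b' c c' b - q2 b b' c c'))
      = S4 (fun b c b' c' => ∑ a : Fin r, (-(Fc f a b c * Fc f a b' c')) • q1 b' c c' b)
        + S4 (fun b c b' c' => ∑ a : Fin r, (Fc f a b c * Fc f a b' c') • q2 b b' c c') := by
    rw [← S4_add]
    refine S4_congr fun b c b' c' => ?_
    rw [← Finset.sum_add_distrib]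
    refine Finset.sum_congr rfl fun a _ => ?_
    rw [smul_sub, sub_eq_add_neg, ← neg_smul, neg_neg]
  rw [hsplit]
  have hswapZ : S4 (fun b c b' c' => ∑ a : Fin r,
        (-(Fc f a b c * Fc f a b' c')) • q1 b c c' b')
      = S4 (fun b c b' c' => ∑ a : Fin r,
        (-(Fc f a b' c * Fc f a b c')) • q1 b' c c' b) := S4_swap13 _
  have hswapY : S4 (fun b c b' c' => ∑ a : Fin r,
        ((2⁻¹ : ℂ) * (Fc f a b c * Fc f a b' c')) • q2 b c b' c')
      = S4 (fun b c b' c' => ∑ a : Fin r,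
        ((2⁻¹ : ℂ) * (Fc f a b b' * Fc f a c c')) • q2 b b' c c') := S4_swap23 _
  rw [hswapZ, hswapY]
  have hRHS : S4 (fun b c b' c' => ((Jr f b b' c c' : ℝ) : ℂ) • (q1 b' c c' b - q2 b b' c c'))
      = S4 (fun b c b' c' => ∑ a : Fin r,
          (Fc f a b b' * Fc f a c c' + Fc f a b' c * Fc f a b c'
            - Fc f a b c * Fc f a b' c') • (q1 b' c c' b - q2 b b' c c')) := by
    refine S4_congr fun b c b' c' => ?_
    have hcast : ((Jr f b b' c c' : ℝ) : ℂ)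
        = ∑ a : Fin r, (Fc f a b b' * Fc f a c c' + Fc f a b' c * Fc f a b c'
            - Fc f a b c * Fc f a b' c') := by
      unfold Jr Fc
      push_cast
      refine Finset.sum_congr rfl fun a _ => ?_
      rw [hf₂ a c b]
      push_cast
      ring
    rw [hcast, Finset.sum_smul]
  rw [hRHS]
  refine Eq.trans ?_ (show
      S4 (fun b c b' c' => ∑ a : Fin r,
        (-(Fc f a b c * Fc f a b' c') - Fc f a b b' * Fc f a c c') • q1 b' c c' b)
      + S4 (fun b c b' c' => ∑ a : Fin r,
        (Fc f a b c * Fc f a b' c' + Fc f a b' c * Fc f a b c') • q2 b b' c c')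
      + S4 (fun b c b' c' => ∑ a : Fin r,
          (Fc f a b b' * Fc f a c c' + Fc f a b' c * Fc f a b c'
            - Fc f a b c * Fc f a b' c') • (q1 b' c c' b - q2 b b' c c'))
      = S4 (fun b c b' c' => ∑ a : Fin r,
          (Fc f a b b' * Fc f a c c' + Fc f a b' c * Fc f a b c'
            - Fc f a b c * Fc f a b' c') • (q1 b' c c' b - q2 b b' c c'))
    from by rw [V1 f, V2 f, zero_add, zero_add])
  simp only [smul_add, smul_sub, S4_smul, ← S4_add, ← S4_sub]
  refine S4_congr fun b c b' c' => ?_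
  simp only [Finset.smul_sum, ← Finset.sum_add_distrib, ← Finset.sum_sub_distrib,
    ← Finset.sum_neg_distrib]
  refine Finset.sum_congr rfl fun a _ => ?_
  module

end Aux6
section Aux7

open MvPolynomial ExteriorAlgebra

variable {r : ℕ}

/-- evaluation of even generators used to extract coefficients. -/
def gP (γ : Fin r) : EvenGen r → ℂ := fun s => if s = ⟨γ, 0, 0⟩ then 1 else 0

def oddTriple (α β δ : Fin r) : Fin 3 → OddGen r :=
  ![⟨false, α, 0⟩, ⟨false, β, 0⟩, ⟨true, δ, (0 : Idx) ::ₘ 0⟩]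

def coordL (α β δ : Fin r) : (OddGen r →₀ ℂ) →ₗ[ℂ] (Fin 3 → ℂ) :=
  LinearMap.pi (fun j => Finsupp.lapply (oddTriple α β δ j))

def altM (α β δ : Fin r) : ∀ i : ℕ, ((OddGen r →₀ ℂ) [⋀^Fin i]→ₗ[ℂ] ℂ) :=
  fun i => match i with
  | 3 => (Matrix.detRowAlternating).compLinearMap (coordL α β δ)
  | _ => 0

def extF (α β δ : Fin r) : ExteriorAlgebra ℂ (OddGen r →₀ ℂ) →ₗ[ℂ] ℂ :=
  ExteriorAlgebra.liftAlternating (altM α β δ)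

def jetF (α β γ δ : Fin r) : Jet r →ₗ[ℂ] ℂ :=
  TensorProduct.lift
    ((LinearMap.mul ℂ ℂ).compl₁₂ (MvPolynomial.aeval (gP γ)).toLinearMap (extF α β δ))

lemma jetF_tmul (α β γ δ : Fin r) (p : MvPolynomial (EvenGen r) ℂ)
    (e : ExteriorAlgebra ℂ (OddGen r →₀ ℂ)) :
    jetF α β γ δ (p ⊗ₜ[ℂ] e) = MvPolynomial.aeval (gP γ) p * extF α β δ e := by
  simp [jetF, LinearMap.compl₁₂_apply, LinearMap.mul_apply']

lemma extF_ι (α β δ : Fin r) (x : OddGen r →₀ ℂ) :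
    extF α β δ (ExteriorAlgebra.ι ℂ x) = 0 := by
  rw [extF, ExteriorAlgebra.liftAlternating_ι]
  exact AlternatingMap.zero_apply _

lemma jetF_q1 (α β γ δ p q w u : Fin r) : jetF α β γ δ (q1 p q w u) = 0 := by
  unfold q1
  rw [map_sum]
  refine Finset.sum_eq_zero fun μ _ => ?_
  rw [map_sum]
  refine Finset.sum_eq_zero fun ν _ => ?_
  rw [map_smul, jetF_tmul, extF_ι, mul_zero, smul_zero]

set_option maxHeartbeats 2000000 in
lemma extF_triple (α β δ x y w : Fin r) (μ : Idx) :
    extF α β δ (ExteriorAlgebra.ι ℂ (eU x) *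
        (ExteriorAlgebra.ι ℂ (eU y) * ExteriorAlgebra.ι ℂ (eW w μ)))
      = (if w = δ ∧ μ = 0 then 1 else 0) *
        ((if x = α then 1 else 0) * (if y = β then 1 else 0)
          - (if x = β then 1 else 0) * (if y = α then 1 else 0)) := by
  rw [extF, ExteriorAlgebra.liftAlternating_ι_mul, ExteriorAlgebra.liftAlternating_ι_mul,
    ExteriorAlgebra.liftAlternating_ι]
  show (((altM α β δ 3).curryLeft (eU x)).curryLeft (eU y)) ![eW w μ] = _
  rw [AlternatingMap.curryLeft_apply_apply, AlternatingMap.curryLeft_apply_apply]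
  show (Matrix.detRowAlternating.compLinearMap (coordL α β δ)) _ = _
  rw [AlternatingMap.compLinearMap_apply]
  change Matrix.det (Matrix.of fun i => coordL α β δ (![eU x, eU y, eW w μ] i)) = _
  rw [Matrix.det_fin_three]
  simp only [Matrix.cons_val_zero, Matrix.cons_val_one, Matrix.head_cons, Matrix.cons_val_two,
    Matrix.tail_cons, Matrix.of_apply, coordL, oddTriple, LinearMap.pi_apply, Finsupp.lapply_apply,
    eU, eW, Finsupp.single_apply, OddGen.mk.injEq, Matrix.cons_val', Matrix.empty_val',
    Matrix.cons_val_fin_one]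
  simp only [Multiset.cons_zero, Multiset.singleton_inj, Bool.false_eq_true, false_and,
    if_false, true_and, and_true, Bool.true_eq_false, and_false]
  split_ifs <;> first
    | ring
    | (exfalso; subst_vars; simp_all)

lemma jetF_q2 (α β γ δ x y c w : Fin r) :
    jetF α β γ δ (q2 x y c w)
      = (if c = γ then 1 else 0) * (if w = δ then 1 else 0) *
        ((if x = α then 1 else 0) * (if y = β then 1 else 0)
          - (if x = β then 1 else 0) * (if y = α then 1 else 0)) := by
  unfold q2
  rw [map_sum]
  rw [Finset.sum_eq_single (0 : Idx)]
  · rw [map_smul, jetF_tmul, extF_triple, MvPolynomial.aeval_X]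
    rw [eta_zero, one_smul, gP]
    simp only [EvenGen.mk.injEq, and_true]
    by_cases hc : c = γ <;> by_cases hw : w = δ <;>
      simp [hc, hw] <;> ring
  · intro ν _ hν
    rw [map_smul, jetF_tmul, extF_triple, MvPolynomial.aeval_X, gP]
    simp only [EvenGen.mk.injEq]
    rw [if_neg (by simp [hν]), if_neg (by simp [hν])]
    simp
  · simp

end Aux7
section Aux8

variable {r : ℕ}

lemma Jr_swap (f : Fin r → Fin r → Fin r → ℝ) (hf₂ : ∀ a b c, f a b c = - f a c b)
    (a b c d : Fin r) : Jr f b a c d = - Jr f a b c d := by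
  unfold Jr
  rw [← Finset.sum_neg_distrib]
  refine Finset.sum_congr rfl fun e _ => ?_
  rw [hf₂ e b a, hf₂ e a c, hf₂ e c b]
  ring

end Aux8

section Collapse

variable {r : ℕ}

lemma quad_collapse (g : Fin r → Fin r → Fin r → Fin r → ℂ) (a b c d : Fin r) :
    (∑ x : Fin r, ∑ x1 : Fin r, ∑ x2 : Fin r, ∑ x3 : Fin r,
      g x x2 x1 x3 * -((if x1 = c then (1:ℂ) else 0) * (if x3 = d then (1:ℂ) else 0) *
        ((if x = a then (1:ℂ) else 0) * (if x2 = b then (1:ℂ) else 0) -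
         (if x = b then (1:ℂ) else 0) * (if x2 = a then (1:ℂ) else 0))))
    = -(g a b c d - g b a c d) := by
  have h1 : ∀ x : Fin r, (∑ x1 : Fin r, ∑ x2 : Fin r, ∑ x3 : Fin r,
      g x x2 x1 x3 * -((if x1 = c then (1:ℂ) else 0) * (if x3 = d then (1:ℂ) else 0) *
        ((if x = a then (1:ℂ) else 0) * (if x2 = b then (1:ℂ) else 0) -
         (if x = b then (1:ℂ) else 0) * (if x2 = a then (1:ℂ) else 0))))
      = ∑ x2 : Fin r, g x x2 c d * -((if x = a then (1:ℂ) else 0) * (if x2 = b then (1:ℂ) else 0) -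
         (if x = b then (1:ℂ) else 0) * (if x2 = a then (1:ℂ) else 0)) := by
    intro x
    rw [Finset.sum_eq_single c]
    · refine Finset.sum_congr rfl fun x2 _ => ?_
      rw [Finset.sum_eq_single d]
      · simp
      · intro x3 _ h3
        simp [h3]
      · simp
    · intro x1 _ h1
      refine Finset.sum_eq_zero fun x2 _ => Finset.sum_eq_zero fun x3 _ => ?_
      simp [h1]
    · simp
  calc (∑ x : Fin r, ∑ x1 : Fin r, ∑ x2 : Fin r, ∑ x3 : Fin r,
      g x x2 x1 x3 * -((if x1 = c then (1:ℂ) else 0) * (if x3 = d then (1:ℂ) else 0) *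
        ((if x = a then (1:ℂ) else 0) * (if x2 = b then (1:ℂ) else 0) -
         (if x = b then (1:ℂ) else 0) * (if x2 = a then (1:ℂ) else 0))))
      = ∑ x : Fin r, ∑ x2 : Fin r, (g x x2 c d * -((if x = a then (1:ℂ) else 0) * (if x2 = b then (1:ℂ) else 0))
          + g x x2 c d * ((if x = b then (1:ℂ) else 0) * (if x2 = a then (1:ℂ) else 0))) := by
        refine Finset.sum_congr rfl fun x _ => ?_
        rw [h1 x]
        refine Finset.sum_congr rfl fun x2 _ => ?_
        ring
    _ = -(g a b c d - g b a c d) := by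
        simp only [Finset.sum_add_distrib]
        have hS1 : (∑ x : Fin r, ∑ x2 : Fin r,
            g x x2 c d * -((if x = a then (1:ℂ) else 0) * (if x2 = b then (1:ℂ) else 0)))
            = -g a b c d := by
          rw [Finset.sum_eq_single a]
          · rw [Finset.sum_eq_single b]
            · simp
            · intro x2 _ h
              simp [h]
            · simp
          · intro x _ h
            exact Finset.sum_eq_zero fun x2 _ => by simp [h]
          · simp
        have hS2 : (∑ x : Fin r, ∑ x2 : Fin r,
            g x x2 c d * ((if x = b then (1:ℂ) else 0) * (if x2 = a then (1:ℂ) else 0)))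
            = g b a c d := by
          rw [Finset.sum_eq_single b]
          · rw [Finset.sum_eq_single a]
            · simp
            · intro x2 _ h
              simp [h]
            · simp
          · intro x _ h
            exact Finset.sum_eq_zero fun x2 _ => by simp [h]
          · simp
        rw [hS1, hS2]
        ring

end Collapse
/-- The second-order tree anomaly of pure Yang-Mills vanishes if and only
if the structure constants satisfy the Jacobi identity:
`𝒜(T,T) := 2(B_{aμ} C_a^μ - B_a D_a) - E_{aμν} C_a^{μν} = 0`
iff `f_{eab} f_{ecd} + f_{ebc} f_{ead} + f_{eca} f_{ebd} = 0` for all `a,b,c,d`. -/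
theorem tree_anomaly_vanishes_iff_jacobi
    (r : ℕ) (hr : 1 ≤ r) (f : Fin r → Fin r → Fin r → ℝ)
    (hf₁ : ∀ a b c, f a b c = - f b a c) (hf₂ : ∀ a b c, f a b c = - f a c b)
    (D : DerData r) :
    ((2 : ℂ) • (∑ a : Fin r, ∑ μ : Idx, Bdn f a μ * Cup D f a μ
          - ∑ a : Fin r, Bgh f a * Dgh D f a)
        - ∑ a : Fin r, ∑ μ : Idx, ∑ ν : Idx, Edd f a μ ν * Cuu D f a μ ν) = 0
      ↔ ∀ a b c d : Fin r,
          (∑ e : Fin r, (f e a b * f e c d + f e b c * f e a d + f e c a * f e b d)) = 0 := by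
  constructor
  · intro h0 a b c d
    rw [keyId D f hf₂] at h0
    have happ := congrArg (jetF a b c d) h0
    rw [map_zero] at happ
    unfold S4 at happ
    simp only [map_sum, map_smul, map_sub, jetF_q1, jetF_q2, zero_sub, smul_eq_mul] at happ
    rw [quad_collapse (fun x x2 x1 x3 => ((Jr f x x2 x1 x3 : ℝ) : ℂ)) a b c d] at happ
    rw [Jr_swap f hf₂ a b c d] at happ
    have hz : ((Jr f a b c d : ℝ) : ℂ) = 0 := by
      push_cast at happ
      linear_combination (-(2:ℂ)⁻¹) * happ
    have hzr : Jr f a b c d = 0 := by exact_mod_cast hz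
    exact hzr
  · intro hJ
    rw [keyId D f hf₂]
    refine Finset.sum_eq_zero fun b _ => Finset.sum_eq_zero fun c _ =>
      Finset.sum_eq_zero fun b' _ => Finset.sum_eq_zero fun c' _ => ?_
    show ((Jr f b b' c c' : ℝ) : ℂ) • (q1 b' c c' b - q2 b b' c c') = 0
    rw [show Jr f b b' c c' = 0 from hJ b b' c c', Complex.ofReal_zero, zero_smul]

end
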